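/- Consider the reduced instance of the strongly stable matching problem with closures obtained from an instance of the envy-free matching problem. For every D-perfect matching σ in G and every pair of distinct doctors d, d′ ∈ D with (d, p_σ(d′)) ∈ E, we have p_σ(d′) >_d p_σ(d) if and only if the edge (d, p_σ(d′)) blocks σ in the reduced instance; consequently, a D-perfect matching is envy-free if and only if it is a stable matching of the reduced instance. -/

import Mathlib

open Classical

variable {D H : Type}

def edgesD (E : Set (D × H)) (d : D) : Set (D × H) := {e ∈ E | e.1 = d}

def edgesH (E : Set (D × H)) (h : H) : Set (D × H) := {e ∈ E | e.2 = h}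

def optD (E : Set (D × H)) (d : D) : Set (Option (D × H)) :=
  insert none (some '' edgesD E d)

def optH (E : Set (D × H)) (h : H) : Set (Option (D × H)) :=
  insert none (some '' edgesH E h)

/-- An instance of the strongly stable matching problem with closures:
a bipartite graph between doctors `D` and hospitals `H` with edge set `E`,
a set `S` of closable hospitals, and for each vertex a transitive, total
preference relation on its incident edges together with `∅` (modelled by
`Option`, where `none` plays the role of `∅`), such that every incident
edge is strictly preferred to `∅`. -/
structure SSMC (D H : Type) where
  E : Set (D × H)
  S : Set H
  prefD : D → Option (D × H) → Option (D × H) → Prop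
  prefH : H → Option (D × H) → Option (D × H) → Prop
  prefD_trans : ∀ d, ∀ e ∈ optD E d, ∀ f ∈ optD E d, ∀ g ∈ optD E d,
    prefD d e f → prefD d f g → prefD d e g
  prefD_total : ∀ d, ∀ e ∈ optD E d, ∀ f ∈ optD E d, prefD d e f ∨ prefD d f e
  prefD_none : ∀ d, ∀ e ∈ edgesD E d, prefD d (some e) none ∧ ¬ prefD d none (some e)
  prefH_trans : ∀ h, ∀ e ∈ optH E h, ∀ f ∈ optH E h, ∀ g ∈ optH E h,
    prefH h e f → prefH h f g → prefH h e g
  prefH_total : ∀ h, ∀ e ∈ optH E h, ∀ f ∈ optH E h, prefH h e f ∨ prefH h f e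
  prefH_none : ∀ h, ∀ e ∈ edgesH E h, prefH h (some e) none ∧ ¬ prefH h none (some e)

namespace SSMC

variable (I : SSMC D H)

/-- `e ≻_d f` -/
def strictD (d : D) (e f : Option (D × H)) : Prop := I.prefD d e f ∧ ¬ I.prefD d f e

/-- `e ∼_d f` -/
def simD (d : D) (e f : Option (D × H)) : Prop := I.prefD d e f ∧ I.prefD d f e

/-- `e ≻_h f` -/
def strictH (h : H) (e f : Option (D × H)) : Prop := I.prefH h e f ∧ ¬ I.prefH h f e

/-- `e ∼_h f` -/
def simH (h : H) (e f : Option (D × H)) : Prop := I.prefH h e f ∧ I.prefH h f e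

/-- A matching: a subset of `E` with at most one edge at each vertex. -/
def isMatching (μ : Set (D × H)) : Prop :=
  μ ⊆ I.E ∧ (∀ e ∈ μ, ∀ f ∈ μ, e.1 = f.1 → e = f) ∧
    (∀ e ∈ μ, ∀ f ∈ μ, e.2 = f.2 → e = f)

end SSMC

/-- `μ(d)`: the edge of `μ` at doctor `d` (or `none`). -/
noncomputable def muD (μ : Set (D × H)) (d : D) : Option (D × H) :=
  if h : ∃ e, e ∈ μ ∧ e.1 = d then some h.choose else none

/-- `μ(h)`: the edge of `μ` at hospital `h` (or `none`). -/
noncomputable def muH (μ : Set (D × H)) (h : H) : Option (D × H) :=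
  if hh : ∃ e, e ∈ μ ∧ e.2 = h then some hh.choose else none

namespace SSMC

variable (I : SSMC D H)

/-- `e` blocks the matching `μ`: `e ∈ E \ μ`, `e` weakly blocks `μ` on both of its
endpoints and strongly blocks `μ` on at least one of them (where blocking on a
hospital `h ∈ S` additionally requires `μ(h) ≠ ∅`). -/
def blocks (μ : Set (D × H)) (e : D × H) : Prop :=
  e ∈ I.E ∧ e ∉ μ ∧
  I.prefD e.1 (some e) (muD μ e.1) ∧
  (I.prefH e.2 (some e) (muH μ e.2) ∧ (e.2 ∈ I.S → muH μ e.2 ≠ none)) ∧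
  (I.strictD e.1 (some e) (muD μ e.1) ∨
    (I.strictH e.2 (some e) (muH μ e.2) ∧ (e.2 ∈ I.S → muH μ e.2 ≠ none)))

/-- A stable matching: no edge blocks it. -/
def stable (μ : Set (D × H)) : Prop :=
  I.isMatching μ ∧ ∀ e, ¬ I.blocks μ e

/-- `Ch_D(F)`: union over doctors `d` of the most preferred edges of `F(d)`. -/
def ChD (F : Set (D × H)) : Set (D × H) :=
  {e ∈ F | ∀ f ∈ F, f.1 = e.1 → I.prefD e.1 (some e) (some f)}

/-- `Ch_H(F)`: union over hospitals `h` of the most preferred edges of `F(h)`. -/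
def ChH (F : Set (D × H)) : Set (D × H) :=
  {e ∈ F | ∀ f ∈ F, f.2 = e.2 → I.prefH e.2 (some e) (some f)}

/-- `Ch(F) = Ch_H(Ch_D(F))`. -/
def Ch (F : Set (D × H)) : Set (D × H) := I.ChH (I.ChD F)

/-- `e ≻_d F` for a flat set `F`. -/
def dSucc (F : Set (D × H)) (e : D × H) : Prop :=
  (∀ f ∈ F, f.1 ≠ e.1) ∨ ∃ f ∈ F, f.1 = e.1 ∧ I.strictD e.1 (some e) (some f)

/-- `e ∼_d F` for a flat set `F`. -/
def dSim (F : Set (D × H)) (e : D × H) : Prop :=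
  ∃ f ∈ F, f.1 = e.1 ∧ I.simD e.1 (some e) (some f)

/-- `block(F)` for a flat set `F ⊆ E`. -/
def setBlock (F : Set (D × H)) : Set (D × H) :=
  {e | e ∈ I.E ∧ e ∉ F ∧ (∃ f ∈ F, f.2 = e.2) ∧
    (I.dSucc F e ∨ I.dSim F e) ∧
    (I.dSucc F e → ∃ f ∈ F, f.2 = e.2 ∧ I.prefH e.2 (some e) (some f)) ∧
    (I.dSim F e → ∃ f ∈ F, f.2 = e.2 ∧ I.strictH e.2 (some e) (some f))}

/-- `L = Ch(E \ R)`. -/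
def Lset (R : Set (D × H)) : Set (D × H) := I.Ch (I.E \ R)

/-- The pre-processing conditions (R1)–(R5) on a pair `(R, μ)`. -/
def preproc (R μ : Set (D × H)) : Prop :=
  R ⊆ I.E ∧ I.isMatching μ ∧
  -- (R1)
  (∀ σ, I.stable σ → ∀ e ∈ R, e ∉ σ) ∧
  -- (R2)
  μ ⊆ I.Ch (I.E \ R) ∧
  -- (R3)
  (∀ d : D, (∃ e ∈ I.E \ R, e.1 = d) → ∃ e ∈ μ, e.1 = d) ∧
  -- (R4)
  R ∩ I.setBlock (I.Ch (I.E \ R)) = ∅ ∧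
  -- (R5)
  (∀ d : D, ∀ e ∈ R, e.1 = d → ∀ f ∈ I.E \ R, f.1 = d → I.prefD d (some e) (some f))

/-- `h` is a critical hospital with respect to `(R, μ)`. -/
def critical (R μ : Set (D × H)) (h : H) : Prop :=
  h ∉ I.S ∧ (∀ e ∈ μ, e.2 ≠ h) ∧
  ((∃ e ∈ I.Ch (I.E \ R), e.2 = h) ∨ (∃ e ∈ R, e.2 = h))

/-- Assumption (★): every doctor strictly prefers any acceptable hospital
outside `S` to any acceptable hospital in `S`. -/
def starAssumption : Prop :=
  ∀ (d : D) (h h' : H), (d, h) ∈ I.E → (d, h') ∈ I.E → h ∈ I.S → h' ∉ I.S →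
    I.strictD d (some (d, h')) (some (d, h))

end SSMC

/-! In the reduced instance every hospital is closable and indifferent among its edges, so a
matched hospital weakly prefers any edge to its partner and never prefers it strictly: an edge
`(d, h')` blocks `σ` exactly when `d` strictly prefers `h'` to `p_σ(d)`, i.e. envies the doctor
matched to `h'`. Conversely a blocking edge must end in a matched hospital (closures), and
`D`-perfection makes its doctor matched as well, so it is an envy pair. -/

theorem muD_eq_some {μ : Set (D × H)} (hμ : Set.InjOn Prod.fst μ) {d : D} {h : H}
    (hdh : (d, h) ∈ μ) : muD μ d = some (d, h) := by
  have hex : ∃ e, e ∈ μ ∧ e.1 = d := ⟨_, hdh, rfl⟩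
  rw [muD, dif_pos hex]
  exact congrArg some (hμ hex.choose_spec.1 hdh hex.choose_spec.2)

theorem muH_eq_some {μ : Set (D × H)} (hμ : Set.InjOn Prod.snd μ) {d : D} {h : H}
    (hdh : (d, h) ∈ μ) : muH μ h = some (d, h) := by
  have hex : ∃ e, e ∈ μ ∧ e.2 = h := ⟨_, hdh, rfl⟩
  rw [muH, dif_pos hex]
  exact congrArg some (hμ hex.choose_spec.1 hdh hex.choose_spec.2)

theorem exists_mem_of_muH_ne_none {μ : Set (D × H)} {h : H} (hne : muH μ h ≠ none) :
    ∃ d, (d, h) ∈ μ := by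
  unfold muH at hne
  split_ifs at hne with hex
  · obtain ⟨e, he, rfl⟩ := hex
    exact ⟨e.1, he⟩
  · exact absurd rfl hne

theorem exists_mem_of_injOn_fst_of_ncard_eq_card [Fintype D] {μ : Set (D × H)}
    (hμ : Set.InjOn Prod.fst μ) (hcard : μ.ncard = Fintype.card D) (d : D) :
    ∃ h, (d, h) ∈ μ := by
  have himg : Prod.fst '' μ = Set.univ := by
    apply Set.eq_of_subset_of_ncard_le (Set.subset_univ _)
    rw [Set.ncard_univ, Nat.card_eq_fintype_card, hμ.ncard_image, hcard]
  obtain ⟨e, he, rfl⟩ : d ∈ Prod.fst '' μ := himg ▸ Set.mem_univ d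
  exact ⟨e.2, he⟩

namespace SSMC

variable {I : SSMC D H}

theorem exists_mem_of_blocks {μ : Set (D × H)} {e : D × H} (hblk : I.blocks μ e)
    (hS : e.2 ∈ I.S) : ∃ d, (d, e.2) ∈ μ :=
  exists_mem_of_muH_ne_none (hblk.2.2.2.1.2 hS)

theorem blocks_iff_of_simH {μ : Set (D × H)} {e : D × H}
    (hsim : I.simH e.2 (some e) (muH μ e.2)) (hne : muH μ e.2 ≠ none) :
    I.blocks μ e ↔ e ∈ I.E ∧ e ∉ μ ∧ I.strictD e.1 (some e) (muD μ e.1) := by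
  have hnotstrict : ¬ I.strictH e.2 (some e) (muH μ e.2) := fun h => h.2 hsim.2
  constructor
  · rintro ⟨heE, hnot, -, -, hdoc | ⟨hhosp, -⟩⟩
    · exact ⟨heE, hnot, hdoc⟩
    · exact absurd hhosp hnotstrict
  · rintro ⟨heE, hnot, hdoc⟩
    exact ⟨heE, hnot, hdoc.1, ⟨hsim.1, fun _ => hne⟩, Or.inl hdoc⟩

theorem blocks_iff_envy {gd : D → H → H → Prop}
    (hpd : ∀ d h h', (d, h) ∈ I.E → (d, h') ∈ I.E →
      (I.prefD d (some (d, h)) (some (d, h')) ↔ gd d h h'))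
    (hph : ∀ (h : H) (e f : D × H), e ∈ I.E → f ∈ I.E → e.2 = h → f.2 = h →
      I.prefH h (some e) (some f))
    {σ : Set (D × H)} (hσ : I.isMatching σ) {d d' : D} {h h' : H}
    (hdh : (d, h) ∈ σ) (hd'h' : (d', h') ∈ σ) (hE : (d, h') ∈ I.E) :
    I.blocks σ (d, h') ↔ gd d h' h ∧ ¬ gd d h h' := by
  obtain ⟨hσE, hfst, hsnd⟩ := hσ
  have hmuD : muD σ d = some (d, h) := muD_eq_some hfst hdh
  have hmuH : muH σ h' = some (d', h') := muH_eq_some hsnd hd'h'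
  have hsim : I.simH h' (some (d, h')) (muH σ h') := by
    rw [hmuH]
    exact ⟨hph h' _ _ hE (hσE hd'h') rfl rfl, hph h' _ _ (hσE hd'h') hE rfl rfl⟩
  rw [blocks_iff_of_simH hsim (by simp [hmuH])]
  simp only [hmuD, strictD, hpd d h' h hE (hσE hdh), hpd d h h' (hσE hdh) hE]
  refine ⟨fun ⟨_, _, henvy⟩ => henvy, fun henvy => ⟨hE, fun hmem => ?_, henvy⟩⟩
  obtain rfl : h = h' := congrArg Prod.snd (hfst _ hdh _ hmem rfl)
  exact henvy.2 henvy.1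

end SSMC

theorem envy_free_iff_stable_general {D H : Type} [Fintype D]
    (E : Set (D × H)) (gd : D → H → H → Prop)
    (I : SSMC D H) (hIE : I.E = E) (hIS : I.S = Set.univ)
    (hIpd : ∀ d h h', (d, h) ∈ E → (d, h') ∈ E →
      (I.prefD d (some (d, h)) (some (d, h')) ↔ gd d h h'))
    (hIph : ∀ (h : H) (e f : D × H), e ∈ E → f ∈ E → e.2 = h → f.2 = h →
      I.prefH h (some e) (some f))
    (σ : Set (D × H)) (hm : I.isMatching σ) (hperf : σ.ncard = Fintype.card D) :
    (∀ (d d' : D) (h h' : H), d ≠ d' → (d, h) ∈ σ → (d', h') ∈ σ →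
        (d, h') ∈ E → ((gd d h' h ∧ ¬ gd d h h') ↔ I.blocks σ (d, h'))) ∧
    ((∀ (d d' : D) (h h' : H), d ≠ d' → (d, h) ∈ σ → (d', h') ∈ σ →
        (d, h') ∈ E → ¬ (gd d h' h ∧ ¬ gd d h h')) ↔ I.stable σ) := by
  subst hIE
  have envy_iff_blocks : ∀ (d d' : D) (h h' : H), d ≠ d' → (d, h) ∈ σ → (d', h') ∈ σ →
      (d, h') ∈ I.E → ((gd d h' h ∧ ¬ gd d h h') ↔ I.blocks σ (d, h')) :=
    fun _ _ _ _ _ hdh hd'h' hE => (SSMC.blocks_iff_envy hIpd hIph hm hdh hd'h' hE).symm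
  refine ⟨envy_iff_blocks, fun hfree => ⟨hm, ?_⟩, fun hst d d' h h' hne hdh hd'h' hE henvy =>
    hst.2 _ ((envy_iff_blocks d d' h h' hne hdh hd'h' hE).mp henvy)⟩
  rintro ⟨d, h'⟩ hblk
  obtain ⟨h, hdh⟩ := exists_mem_of_injOn_fst_of_ncard_eq_card hm.2.1 hperf d
  obtain ⟨d', hd'h'⟩ := SSMC.exists_mem_of_blocks hblk (hIS ▸ Set.mem_univ h')
  have hne : d ≠ d' := by
    rintro rfl
    exact hblk.2.1 hd'h'
  exact hfree d d' h h' hne hdh hd'h' hblk.1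
    ((envy_iff_blocks d d' h h' hne hdh hd'h' hblk.1).mpr hblk)

/-- in the reduced instance of the strongly stable matching
problem with closures obtained from an envy-free matching instance
(`S = H`, doctor preferences induced by `≳_d`, hospitals indifferent among all
incident edges), for every `D`-perfect matching `σ` and distinct doctors
`d, d'` with `(d, p_σ(d')) ∈ E`, we have `p_σ(d') >_d p_σ(d)` iff the edge
`(d, p_σ(d'))` blocks `σ`; consequently, a `D`-perfect matching is envy-free
iff it is stable in the reduced instance. -/
theorem envy_free_iff_stable {D H : Type} [Fintype D] [Fintype H]
    (E : Set (D × H)) (gd : D → H → H → Prop)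
    (hg_total : ∀ d h h', (d, h) ∈ E → (d, h') ∈ E → gd d h h' ∨ gd d h' h)
    (hg_trans : ∀ d h h' h'', (d, h) ∈ E → (d, h') ∈ E → (d, h'') ∈ E →
      gd d h h' → gd d h' h'' → gd d h h'')
    (I : SSMC D H) (hIE : I.E = E) (hIS : I.S = Set.univ)
    (hIpd : ∀ d h h', (d, h) ∈ E → (d, h') ∈ E →
      (I.prefD d (some (d, h)) (some (d, h')) ↔ gd d h h'))
    (hIph : ∀ (h : H) (e f : D × H), e ∈ E → f ∈ E → e.2 = h → f.2 = h →
      I.prefH h (some e) (some f))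
    (σ : Set (D × H)) (hm : I.isMatching σ) (hperf : σ.ncard = Fintype.card D) :
    (∀ (d d' : D) (h h' : H), d ≠ d' → (d, h) ∈ σ → (d', h') ∈ σ →
        (d, h') ∈ E → ((gd d h' h ∧ ¬ gd d h h') ↔ I.blocks σ (d, h'))) ∧
    ((∀ (d d' : D) (h h' : H), d ≠ d' → (d, h) ∈ σ → (d', h') ∈ σ →
        (d, h') ∈ E → ¬ (gd d h' h ∧ ¬ gd d h h')) ↔ I.stable σ) :=
  envy_free_iff_stable_general E gd I hIE hIS hIpd hIph σ hm hperf
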